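/- For k ≥ 2 and every pair of vertices c_1, c_2 of W_{2k+1}, there exists a homomorphism f from the freezing gadget F_k(x,y) to W_{2k+1} with f(x) = c_1 and f(y) = c_2. -/
import Mathlib


def IsHom {A B : Type*} (AdjG : A → A → Prop) (AdjH : B → B → Prop) (f : A → B) : Prop :=
  ∀ u v : A, AdjG u v → AdjH (f u) (f v)

open Classical in
/-- The map obtained from `f` by recolouring the vertex `v` to the colour `b`. -/
noncomputable def recol {A B : Type*} (f : A → B) (v : A) (b : B) : A → B :=
  fun x => if x = v then b else f x

/-- `f` is frozen: a homomorphism such that no single-vertex recolouring is one. -/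
def Frozen {A B : Type*} (AdjG : A → A → Prop) (AdjH : B → B → Prop) (f : A → B) : Prop :=
  IsHom AdjG AdjH f ∧ ∀ (v : A) (b : B), b ≠ f v → ¬ IsHom AdjG AdjH (recol f v b)

/-- The vertex set of the wheel `W_{2k+1}`: `none` is the hub `α`, `some i` the rim. -/
abbrev WheelV (k : ℕ) : Type := Option (ZMod (2 * k + 1))

/-- Adjacency in the wheel `W_{2k+1}`: the hub is adjacent to every rim vertex and rim
vertices `i, j` are adjacent iff they are consecutive on the `(2k+1)`-cycle. -/
def WheelAdj (k : ℕ) : WheelV k → WheelV k → Prop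
  | none, none => False
  | none, some _ => True
  | some _, none => True
  | some i, some j => j = i + 1 ∨ i = j + 1

/-- The vertex set of the freezing gadget `F_k(x,y)`. -/
inductive GV (k : ℕ) : Type
  | x : GV k
  | y : GV k
  | zx : ZMod (4 * k - 2) → GV k
  | zy : ZMod (4 * k - 2) → GV k
  | bx : GV k
  | b_y : GV k
  | w : ZMod (2 * k + 1) → GV k
  | al : GV k
deriving DecidableEq

/-- The edges of the freezing gadget `F_k(x,y)` (one orientation of each edge):
`z^x` and `z^y` are cycles of length `4k-2`; `z^x_1, z^x_{2k}` are adjacent to `x` and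
`z^y_1, z^y_{2k}` to `y`; `z^x_0, z^x_{2k-1}` are adjacent to `b^x` and `z^y_0, z^y_{2k-1}`
to `b^y`; `y` is adjacent to `b^x` and `x` to `b^y`; `w` is a cycle of length `2k+1`; and
`α'` is joined to every vertex except itself, `x`, `y` and the neighbours of `x` and `y`. -/
def GE (k : ℕ) : GV k → GV k → Prop
  | .zx i, .zx j => j = i + 1
  | .zy i, .zy j => j = i + 1
  | .x, .zx i => i = 1 ∨ i = ((2 * k : ℕ) : ZMod (4 * k - 2))
  | .y, .zy i => i = 1 ∨ i = ((2 * k : ℕ) : ZMod (4 * k - 2))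
  | .bx, .zx i => i = 0 ∨ i = ((2 * k - 1 : ℕ) : ZMod (4 * k - 2))
  | .b_y, .zy i => i = 0 ∨ i = ((2 * k - 1 : ℕ) : ZMod (4 * k - 2))
  | .y, .bx => True
  | .x, .b_y => True
  | .w i, .w j => j = i + 1
  | .al, .zx i => i ≠ 1 ∧ i ≠ ((2 * k : ℕ) : ZMod (4 * k - 2))
  | .al, .zy i => i ≠ 1 ∧ i ≠ ((2 * k : ℕ) : ZMod (4 * k - 2))
  | .al, .w _ => True
  | _, _ => False

/-- The (symmetric) adjacency relation of the freezing gadget `F_k(x,y)`. -/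
def GAdj (k : ℕ) (u v : GV k) : Prop := GE k u v ∨ GE k v u


/-- Walk on the rim used for the `z`-cycles: `i ↦ 1 + min(i, 4k-2-i)` (mod `2k+1`). -/
def gfun (k : ℕ) (i : ZMod (4 * k - 2)) : ZMod (2 * k + 1) :=
  ((1 + min i.val (4 * k - 2 - i.val) : ℕ) : ZMod (2 * k + 1))

/-- The homomorphism witnessing `stmt_13`. -/
def Ffun (k : ℕ) (c₁ c₂ : WheelV k) : GV k → WheelV k
  | .x => c₁
  | .y => c₂
  | .zx i =>
      if c₁ ≠ none ∧ (i = 1 ∨ i = ((2 * k : ℕ) : ZMod (4 * k - 2))) then none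
      else some (gfun k i)
  | .zy i =>
      if c₂ ≠ none ∧ (i = 1 ∨ i = ((2 * k : ℕ) : ZMod (4 * k - 2))) then none
      else some (gfun k i)
  | .bx => if c₂ = none then some 0 else none
  | .b_y => if c₁ = none then some 0 else none
  | .w i => some i
  | .al => none

/-- For `k ≥ 2` and any two vertices `c₁, c₂` of `W_{2k+1}`, there is a homomorphism `f`
from the freezing gadget `F_k(x,y)` to `W_{2k+1}` with `f(x) = c₁` and `f(y) = c₂`. -/
theorem stmt_13 (k : ℕ) (hk : 2 ≤ k) (c₁ c₂ : WheelV k) :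
    ∃ f : GV k → WheelV k,
      IsHom (GAdj k) (WheelAdj k) f ∧ f GV.x = c₁ ∧ f GV.y = c₂ := by
  haveI : NeZero (4 * k - 2) := ⟨by omega⟩
  haveI : Fact (1 < 4 * k - 2) := ⟨by omega⟩
  have hval1 : (1 : ZMod (4 * k - 2)).val = 1 := ZMod.val_one _
  have hval0 : (0 : ZMod (4 * k - 2)).val = 0 := ZMod.val_zero
  have hvalk : (((2 * k : ℕ)) : ZMod (4 * k - 2)).val = 2 * k :=
    ZMod.val_cast_of_lt (by omega)
  have hvalk1 : (((2 * k - 1 : ℕ)) : ZMod (4 * k - 2)).val = 2 * k - 1 :=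
    ZMod.val_cast_of_lt (by omega)
  have hvaladd : ∀ i : ZMod (4 * k - 2), (i + 1).val = (i.val + 1) % (4 * k - 2) := by
    intro i; rw [ZMod.val_add, hval1]
  have hstep : ∀ i : ZMod (4 * k - 2),
      gfun k (i + 1) = gfun k i + 1 ∨ gfun k i = gfun k (i + 1) + 1 := by
    intro i
    have hv : i.val < 4 * k - 2 := ZMod.val_lt i
    have key : (1 + min ((i+1)).val (4*k-2 - (i+1).val))
        = (1 + min i.val (4*k-2 - i.val)) + 1
        ∨ (1 + min i.val (4*k-2 - i.val))
        = (1 + min ((i+1)).val (4*k-2 - (i+1).val)) + 1 := by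
      rw [hvaladd]
      rcases Nat.lt_or_ge (i.val + 1) (4*k-2) with h | h
      · rw [Nat.mod_eq_of_lt h]; omega
      · have h2 : i.val + 1 = 4*k-2 := by omega
        rw [h2, Nat.mod_self]; omega
    rcases key with h | h
    · left; unfold gfun; rw [h]; push_cast; ring
    · right; unfold gfun; rw [h]; push_cast; ring
  have hgadj : ∀ i : ZMod (4 * k - 2),
      WheelAdj k (some (gfun k i)) (some (gfun k (i + 1))) := by
    intro i
    rcases hstep i with h | h
    · exact Or.inl h
    · exact Or.inr h
  have hg0 : gfun k (0 : ZMod (4 * k - 2)) = 1 := by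
    unfold gfun; rw [hval0]; simp
  have hgk1 : gfun k (((2 * k - 1 : ℕ)) : ZMod (4 * k - 2)) = ((2 * k : ℕ) : ZMod (2 * k + 1)) := by
    unfold gfun; rw [hvalk1]
    have hmin : min (2 * k - 1) (4 * k - 2 - (2 * k - 1)) = 2 * k - 1 := by omega
    rw [hmin]; congr 1; omega
  have hadj01 : WheelAdj k (some 0) (some 1) := Or.inl (zero_add 1).symm
  have hadj0k : WheelAdj k (some 0) (some ((2 * k : ℕ) : ZMod (2 * k + 1))) := by
    refine Or.inr ?_
    rw [show ((2 * k : ℕ) : ZMod (2 * k + 1)) + 1 = ((2 * k + 1 : ℕ) : ZMod (2 * k + 1)) by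
      push_cast; ring, ZMod.natCast_self]
  have hne2 : ∀ i : ZMod (4 * k - 2),
      (i = 1 ∨ i = ((2 * k : ℕ) : ZMod (4 * k - 2))) →
      (i + 1 = 1 ∨ i + 1 = ((2 * k : ℕ) : ZMod (4 * k - 2))) → False := by
    intro i hi hj
    have h1 : i.val = 1 ∨ i.val = 2 * k := by
      rcases hi with h | h <;> rw [h]
      · exact Or.inl hval1
      · exact Or.inr hvalk
    have h2 : (i + 1).val = 1 ∨ (i + 1).val = 2 * k := by
      rcases hj with h | h <;> rw [h]
      · exact Or.inl hval1
      · exact Or.inr hvalk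
    rw [hvaladd] at h2
    rcases h1 with h | h <;> rw [h] at h2 <;>
      rw [Nat.mod_eq_of_lt (by omega)] at h2 <;> omega
  have hne3 : ∀ i : ZMod (4 * k - 2),
      (i = 0 ∨ i = ((2 * k - 1 : ℕ) : ZMod (4 * k - 2))) →
      ¬(i = 1 ∨ i = ((2 * k : ℕ) : ZMod (4 * k - 2))) := by
    intro i hi hj
    have h1 : i.val = 0 ∨ i.val = 2 * k - 1 := by
      rcases hi with h | h <;> rw [h]
      · exact Or.inl hval0
      · exact Or.inr hvalk1
    have h2 : i.val = 1 ∨ i.val = 2 * k := by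
      rcases hj with h | h <;> rw [h]
      · exact Or.inl hval1
      · exact Or.inr hvalk
    omega
  have hsym : ∀ a b : WheelV k, WheelAdj k a b → WheelAdj k b a := by
    intro a b h
    cases a <;> cases b <;> first
      | trivial
      | exact h
      | exact h.symm
  have hE : ∀ u v : GV k, GE k u v →
      WheelAdj k (Ffun k c₁ c₂ u) (Ffun k c₁ c₂ v) := by
    intro u v h
    cases u <;> cases v <;> try exact False.elim h
    -- x.zx
    · rename_i i
      simp only [Ffun]
      cases c₁ with
      | none => rw [if_neg (by simp)]; trivial
      | some a => rw [if_pos ⟨by simp, h⟩]; trivial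
    -- x.b_y
    · simp only [Ffun]
      cases c₁ with
      | none => rw [if_pos rfl]; trivial
      | some a => rw [if_neg (by simp)]; trivial
    -- y.zy
    · rename_i i
      simp only [Ffun]
      cases c₂ with
      | none => rw [if_neg (by simp)]; trivial
      | some a => rw [if_pos ⟨by simp, h⟩]; trivial
    -- y.bx
    · simp only [Ffun]
      cases c₂ with
      | none => rw [if_pos rfl]; trivial
      | some a => rw [if_neg (by simp)]; trivial
    -- zx.zx
    · rename_i i j
      have hj : j = i + 1 := h
      subst hj
      simp only [Ffun]
      split_ifs with hP hQ hQ
      · exact (hne2 i hP.2 hQ.2).elim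
      · trivial
      · trivial
      · exact hgadj i
    -- zy.zy
    · rename_i i j
      have hj : j = i + 1 := h
      subst hj
      simp only [Ffun]
      split_ifs with hP hQ hQ
      · exact (hne2 i hP.2 hQ.2).elim
      · trivial
      · trivial
      · exact hgadj i
    -- bx.zx
    · rename_i i
      have hi : i = 0 ∨ i = ((2 * k - 1 : ℕ) : ZMod (4 * k - 2)) := h
      simp only [Ffun]
      split_ifs with hA hB hB
      · trivial
      · rcases hi with hh | hh <;> rw [hh]
        · rw [hg0]; exact hadj01
        · rw [hgk1]; exact hadj0k
      · exact (hne3 i hi hB.2).elim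
      · trivial
    -- b_y.zy
    · rename_i i
      have hi : i = 0 ∨ i = ((2 * k - 1 : ℕ) : ZMod (4 * k - 2)) := h
      simp only [Ffun]
      split_ifs with hA hB hB
      · trivial
      · rcases hi with hh | hh <;> rw [hh]
        · rw [hg0]; exact hadj01
        · rw [hgk1]; exact hadj0k
      · exact (hne3 i hi hB.2).elim
      · trivial
    -- w.w
    · rename_i i j
      have hj : j = i + 1 := h
      simp only [Ffun]
      exact Or.inl hj
    -- al.zx
    · rename_i i
      have hi : i ≠ 1 ∧ i ≠ ((2 * k : ℕ) : ZMod (4 * k - 2)) := h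
      simp only [Ffun]
      rw [if_neg (fun hc => hc.2.elim hi.1 hi.2)]
      trivial
    -- al.zy
    · rename_i i
      have hi : i ≠ 1 ∧ i ≠ ((2 * k : ℕ) : ZMod (4 * k - 2)) := h
      simp only [Ffun]
      rw [if_neg (fun hc => hc.2.elim hi.1 hi.2)]
      trivial
    -- al.w
    · simp only [Ffun]; trivial
  refine ⟨Ffun k c₁ c₂, ?_, rfl, rfl⟩
  intro u v huv
  have huv' : GE k u v ∨ GE k v u := huv
  rcases huv' with h | h
  · exact hE u v h
  · exact hsym _ _ (hE v u h)
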